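/- Let F = N(μ_F, σ_F²) and G = N(μ_G, σ_G²) be normal distributions with F ≠ G. Then the Cramér distance assigns a weakly smaller relative weight to dispersion than the AVM: (Disp_+^{CD}(F,G) + Disp_-^{CD}(F,G)) / CD(F,G) ≤ (Disp_+^{AVM}(F,G) + Disp_-^{AVM}(F,G)) / AVM(F,G). -/

import Mathlib

/-
If `σ_F = σ_G` the Cramér dispersion vanishes. Otherwise write
`M s a = a (2Φ(a/s) - 1) + 2 s φ(a/s)` (`foldedNormalMean`), the mean of `|N(a, s²)|`.
Then `AVM = M σ̃ μ̃` and `CD = M ρ̃ μ̃ - c` with `c = √2 φ(0) (σ_F + σ_G)`, and the dispersion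
terms `d` and `k` are the same expressions at `μ̃ = 0`. With `Δ s = M s μ̃ - M s 0`, the claim
`k / (k + Δ ρ̃) ≤ d / (d + Δ σ̃)` is `k Δ σ̃ ≤ d Δ ρ̃`. Since `∂ₐ M s a = 2Φ(a/s) - 1` and `Φ` is
concave on `[0, ∞)`, `s ↦ s Δ s` is monotone, so `σ̃ Δ σ̃ ≤ ρ̃ Δ ρ̃`; it remains to check
`k ρ̃ ≤ σ̃ d`, which is the elementary bound `(2ρ̃ - √2 (σ_F + σ_G)) ρ̃ ≤ 2 σ̃²`.
-/

open MeasureTheory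

/-- Standard normal density. -/
noncomputable def stdPdf (x : ℝ) : ℝ :=
  (Real.sqrt (2 * Real.pi))⁻¹ * Real.exp (-(x ^ 2) / 2)

/-- Standard normal distribution function. -/
noncomputable def stdCdf (x : ℝ) : ℝ := ∫ t in Set.Iic x, stdPdf t

open Real Set ProbabilityTheory

lemma stdPdf_eq_gaussianPDFReal : stdPdf = gaussianPDFReal 0 1 := by
  ext x
  simp [stdPdf, gaussianPDFReal]

lemma stdPdf_pos (x : ℝ) : 0 < stdPdf x := by
  rw [stdPdf_eq_gaussianPDFReal]
  exact gaussianPDFReal_pos _ _ _ one_ne_zero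

lemma integrable_stdPdf : Integrable stdPdf :=
  stdPdf_eq_gaussianPDFReal ▸ integrable_gaussianPDFReal 0 1

lemma integral_stdPdf : ∫ x, stdPdf x = 1 := by
  rw [stdPdf_eq_gaussianPDFReal]
  exact integral_gaussianPDFReal_eq_one 0 one_ne_zero

@[fun_prop]
lemma continuous_stdPdf : Continuous stdPdf := by
  unfold stdPdf
  fun_prop

lemma stdPdf_neg (x : ℝ) : stdPdf (-x) = stdPdf x := by
  simp [stdPdf]

lemma hasDerivAt_stdPdf (x : ℝ) : HasDerivAt stdPdf (-x * stdPdf x) x := by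
  have h : HasDerivAt (fun x : ℝ => -(x ^ 2) / 2) (-x) x :=
    ((hasDerivAt_pow 2 x).neg.div_const 2).congr_deriv (by push_cast; ring)
  refine (h.exp.const_mul (√(2 * π))⁻¹).congr_deriv ?_
  simp only [stdPdf]
  ring

lemma antitoneOn_stdPdf : AntitoneOn stdPdf (Ici 0) := by
  intro u hu v _ huv
  unfold stdPdf
  gcongr

lemma stdCdf_sub_stdCdf (y x : ℝ) : stdCdf x - stdCdf y = ∫ t in y..x, stdPdf t :=
  intervalIntegral.integral_Iic_sub_Iic integrable_stdPdf.integrableOn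
    integrable_stdPdf.integrableOn

lemma stdCdf_zero : stdCdf 0 = 1 / 2 := by
  have h_symm : stdCdf 0 = ∫ t in Ioi 0, stdPdf t := by
    simpa [stdCdf, stdPdf_neg] using integral_comp_neg_Iic 0 stdPdf
  have h_total : stdCdf 0 + ∫ t in Ioi 0, stdPdf t = 1 :=
    integral_stdPdf ▸ intervalIntegral.integral_Iic_add_Ioi integrable_stdPdf.integrableOn
      integrable_stdPdf.integrableOn
  linarith

lemma hasDerivAt_stdCdf (x : ℝ) : HasDerivAt stdCdf (stdPdf x) x := by
  have h : HasDerivAt (fun y => stdCdf 0 + ∫ t in (0 : ℝ)..y, stdPdf t) (stdPdf x) x :=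
    (intervalIntegral.integral_hasDerivAt_right integrable_stdPdf.intervalIntegrable
      continuous_stdPdf.aestronglyMeasurable.stronglyMeasurableAtFilter
      continuous_stdPdf.continuousAt).const_add _
  refine h.congr_of_eventuallyEq (Filter.Eventually.of_forall fun y => ?_)
  simp only [← stdCdf_sub_stdCdf]
  ring

@[fun_prop]
lemma continuous_stdCdf : Continuous stdCdf :=
  continuous_iff_continuousAt.2 fun x => (hasDerivAt_stdCdf x).continuousAt

lemma half_le_stdCdf {z : ℝ} (hz : 0 ≤ z) : 1 / 2 ≤ stdCdf z := by
  have h := stdCdf_sub_stdCdf 0 z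
  have : 0 ≤ ∫ t in (0 : ℝ)..z, stdPdf t :=
    intervalIntegral.integral_nonneg hz fun t _ => (stdPdf_pos t).le
  rw [stdCdf_zero] at h
  linarith

lemma concaveOn_stdCdf : ConcaveOn ℝ (Ici 0) stdCdf := by
  have h_deriv : deriv stdCdf = stdPdf := funext fun x => (hasDerivAt_stdCdf x).deriv
  refine AntitoneOn.concaveOn_of_deriv (convex_Ici 0) continuous_stdCdf.continuousOn
    (fun x _ => (hasDerivAt_stdCdf x).differentiableAt.differentiableWithinAt) ?_
  rw [h_deriv, interior_Ici]
  exact antitoneOn_stdPdf.mono Ioi_subset_Ici_self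

lemma mul_two_stdCdf_div_sub_one_le {σ ρ x : ℝ} (hσ : 0 < σ) (hσρ : σ ≤ ρ) (hx : 0 ≤ x) :
    σ * (2 * stdCdf (x / σ) - 1) ≤ ρ * (2 * stdCdf (x / ρ) - 1) := by
  have hρ : 0 < ρ := hσ.trans_le hσρ
  set t := σ / ρ
  have h_concave := concaveOn_stdCdf.2 (mem_Ici.2 (div_nonneg hx hσ.le)) (mem_Ici.2 le_rfl)
    (div_nonneg hσ.le hρ.le) (sub_nonneg.2 ((div_le_one hρ).2 hσρ)) (add_sub_cancel t 1)
  have ht : t * (x / σ) = x / ρ := by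
    simp only [t]
    field_simp
  simp only [smul_eq_mul, mul_zero, add_zero, stdCdf_zero] at h_concave
  rw [ht] at h_concave
  calc σ * (2 * stdCdf (x / σ) - 1) = ρ * (2 * (t * stdCdf (x / σ) + (1 - t) * (1 / 2)) - 1) := by
        simp only [t]
        field_simp
        ring
    _ ≤ ρ * (2 * stdCdf (x / ρ) - 1) := by gcongr

noncomputable def foldedNormalMean (s a : ℝ) : ℝ :=
  a * (2 * stdCdf (a / s) - 1) + 2 * s * stdPdf (a / s)

lemma foldedNormalMean_zero_right (s : ℝ) : foldedNormalMean s 0 = 2 * s * stdPdf 0 := by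
  simp [foldedNormalMean]

lemma hasDerivAt_foldedNormalMean {s : ℝ} (hs : s ≠ 0) (a : ℝ) :
    HasDerivAt (foldedNormalMean s) (2 * stdCdf (a / s) - 1) a := by
  have hu : HasDerivAt (fun x : ℝ => x / s) (1 / s) a := by
    simpa using (hasDerivAt_id a).div_const s
  have h := ((hasDerivAt_id a).mul (((hasDerivAt_stdCdf (a / s)).comp a hu).const_mul 2
    |>.sub_const 1)).add (((hasDerivAt_stdPdf (a / s)).comp a hu).const_mul (2 * s))
  refine h.congr_deriv ?_
  simp only [Function.comp_apply, id]
  field_simp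
  ring

lemma foldedNormalMean_sub_zero {s : ℝ} (hs : s ≠ 0) (a : ℝ) :
    foldedNormalMean s a - foldedNormalMean s 0 = ∫ x in (0 : ℝ)..a, (2 * stdCdf (x / s) - 1) :=
  (intervalIntegral.integral_eq_sub_of_hasDerivAt (fun x _ => hasDerivAt_foldedNormalMean hs x)
    ((by fun_prop : Continuous fun x => 2 * stdCdf (x / s) - 1).intervalIntegrable _ _)).symm

lemma foldedNormalMean_zero_le {s a : ℝ} (hs : 0 < s) (ha : 0 ≤ a) :
    foldedNormalMean s 0 ≤ foldedNormalMean s a := by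
  rw [← sub_nonneg, foldedNormalMean_sub_zero hs.ne']
  refine intervalIntegral.integral_nonneg ha fun x hx => ?_
  linarith [half_le_stdCdf (div_nonneg hx.1 hs.le)]

lemma mul_foldedNormalMean_sub_zero_le {σ ρ a : ℝ} (hσ : 0 < σ) (hσρ : σ ≤ ρ) (ha : 0 ≤ a) :
    σ * (foldedNormalMean σ a - foldedNormalMean σ 0) ≤
      ρ * (foldedNormalMean ρ a - foldedNormalMean ρ 0) := by
  have hρ : 0 < ρ := hσ.trans_le hσρ
  rw [foldedNormalMean_sub_zero hσ.ne', foldedNormalMean_sub_zero hρ.ne',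
    ← intervalIntegral.integral_const_mul, ← intervalIntegral.integral_const_mul]
  refine intervalIntegral.integral_mono_on ha (Continuous.intervalIntegrable (by fun_prop) _ _)
    (Continuous.intervalIntegrable (by fun_prop) _ _) fun x hx => ?_
  exact mul_two_stdCdf_div_sub_one_le hσ hσρ hx.1

lemma div_add_le_div_add {k d x y : ℝ} (hk : 0 < k) (hd : 0 < d) (hx : 0 ≤ x) (hy : 0 ≤ y)
    (h : k * y ≤ d * x) : k / (k + x) ≤ d / (d + y) := by
  rw [div_le_div_iff₀ (by positivity) (by positivity)]
  linear_combination h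

lemma sub_div_sub_le_foldedNormalMean_zero_div {σ ρ a c : ℝ} (hσ : 0 < σ) (hσρ : σ ≤ ρ)
    (ha : 0 ≤ a) (hk : 0 < foldedNormalMean ρ 0 - c)
    (hkρ : (foldedNormalMean ρ 0 - c) * ρ ≤ σ * foldedNormalMean σ 0) :
    (foldedNormalMean ρ 0 - c) / (foldedNormalMean ρ a - c) ≤
      foldedNormalMean σ 0 / foldedNormalMean σ a := by
  have hρ : 0 < ρ := hσ.trans_le hσρ
  have hσ_disp : 0 < foldedNormalMean σ 0 := by
    rw [foldedNormalMean_zero_right]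
    exact mul_pos (by positivity) (stdPdf_pos 0)
  have hσ_growth := sub_nonneg.2 (foldedNormalMean_zero_le hσ ha)
  have h_cross : (foldedNormalMean ρ 0 - c) * (foldedNormalMean σ a - foldedNormalMean σ 0) ≤
      foldedNormalMean σ 0 * (foldedNormalMean ρ a - foldedNormalMean ρ 0) := by
    refine le_of_mul_le_mul_left ?_ hρ
    calc ρ * ((foldedNormalMean ρ 0 - c) * (foldedNormalMean σ a - foldedNormalMean σ 0))
        = (foldedNormalMean ρ 0 - c) * ρ * (foldedNormalMean σ a - foldedNormalMean σ 0) := by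
          ring
      _ ≤ σ * foldedNormalMean σ 0 * (foldedNormalMean σ a - foldedNormalMean σ 0) :=
          mul_le_mul_of_nonneg_right hkρ hσ_growth
      _ = foldedNormalMean σ 0 * (σ * (foldedNormalMean σ a - foldedNormalMean σ 0)) := by
          ring
      _ ≤ foldedNormalMean σ 0 * (ρ * (foldedNormalMean ρ a - foldedNormalMean ρ 0)) :=
          mul_le_mul_of_nonneg_left (mul_foldedNormalMean_sub_zero_le hσ hσρ ha) hσ_disp.le
      _ = ρ * (foldedNormalMean σ 0 * (foldedNormalMean ρ a - foldedNormalMean ρ 0)) := by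
          ring
  simpa using div_add_le_div_add hk hσ_disp
    (sub_nonneg.2 (foldedNormalMean_zero_le hρ ha)) hσ_growth h_cross

lemma abs_sub_le_sqrt_sq_add_sq {x y : ℝ} (hx : 0 ≤ x) (hy : 0 ≤ y) :
    |x - y| ≤ √(x ^ 2 + y ^ 2) := by
  rw [← sqrt_sq_eq_abs]
  exact sqrt_le_sqrt (by nlinarith [mul_nonneg hx hy])

lemma add_le_sqrt_two_mul_sqrt_sq_add_sq (x y : ℝ) : x + y ≤ √2 * √(x ^ 2 + y ^ 2) := by
  rw [← sqrt_mul zero_le_two]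
  exact le_sqrt_of_sq_le (by nlinarith [sq_nonneg (x - y)])

lemma add_lt_sqrt_two_mul_sqrt_sq_add_sq {x y : ℝ} (hxy : x ≠ y) :
    x + y < √2 * √(x ^ 2 + y ^ 2) := by
  rw [← sqrt_mul zero_le_two]
  exact lt_sqrt_of_sq_lt (by nlinarith [sq_pos_of_ne_zero (sub_ne_zero.2 hxy)])

lemma two_mul_sqrt_sub_sqrt_two_mul_add_pos {x y : ℝ} (hxy : x ≠ y) :
    0 < 2 * √(x ^ 2 + y ^ 2) - √2 * (x + y) := by
  have h := mul_lt_mul_of_pos_left (add_lt_sqrt_two_mul_sqrt_sq_add_sq hxy)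
    (sqrt_pos.2 zero_lt_two)
  rw [← mul_assoc, mul_self_sqrt zero_le_two] at h
  linarith

lemma two_mul_sqrt_sub_sqrt_two_mul_add_mul_sqrt_le {x y : ℝ} (hx : 0 ≤ x) (hy : 0 ≤ y) :
    (2 * √(x ^ 2 + y ^ 2) - √2 * (x + y)) * √(x ^ 2 + y ^ 2) ≤ 2 * (x - y) ^ 2 := by
  have h_sq : √(x ^ 2 + y ^ 2) ^ 2 = x ^ 2 + y ^ 2 := sq_sqrt (by positivity)
  nlinarith [mul_le_mul_of_nonneg_right (add_le_sqrt_two_mul_sqrt_sq_add_sq x y)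
    (add_nonneg hx hy)]

theorem cd_disp_weight_le_avm_general (μF μG σF σG : ℝ)
    (hσF : 0 < σF) (hσG : 0 < σG) :
    (σF = σG →
      (2 * Real.sqrt (σF ^ 2 + σG ^ 2) * stdPdf 0 -
          Real.sqrt 2 * stdPdf 0 * (σF + σG)) /
        (2 * Real.sqrt (σF ^ 2 + σG ^ 2) *
            stdPdf (|μF - μG| / Real.sqrt (σF ^ 2 + σG ^ 2)) +
          |μF - μG| *
            (2 * stdCdf (|μF - μG| / Real.sqrt (σF ^ 2 + σG ^ 2)) - 1) -
          Real.sqrt 2 * stdPdf 0 * (σF + σG)) ≤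
      (2 * |σF - σG| * stdPdf 0) / |μF - μG|) ∧
    (σF ≠ σG →
      (2 * Real.sqrt (σF ^ 2 + σG ^ 2) * stdPdf 0 -
          Real.sqrt 2 * stdPdf 0 * (σF + σG)) /
        (2 * Real.sqrt (σF ^ 2 + σG ^ 2) *
            stdPdf (|μF - μG| / Real.sqrt (σF ^ 2 + σG ^ 2)) +
          |μF - μG| *
            (2 * stdCdf (|μF - μG| / Real.sqrt (σF ^ 2 + σG ^ 2)) - 1) -
          Real.sqrt 2 * stdPdf 0 * (σF + σG)) ≤
      (2 * |σF - σG| * stdPdf 0) /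
        (|μF - μG| * (2 * stdCdf (|μF - μG| / |σF - σG|) - 1) +
          2 * |σF - σG| * stdPdf (|μF - μG| / |σF - σG|))) := by
  refine ⟨fun hσ => ?_, fun hσ => ?_⟩
  · subst hσ
    have h_disp : 2 * √(σF ^ 2 + σF ^ 2) * stdPdf 0 - √2 * stdPdf 0 * (σF + σF) = 0 := by
      rw [← two_mul, sqrt_mul zero_le_two, sqrt_sq hσF.le]
      ring
    simp [h_disp]
  have h_disp : foldedNormalMean √(σF ^ 2 + σG ^ 2) 0 - √2 * stdPdf 0 * (σF + σG) =
      stdPdf 0 * (2 * √(σF ^ 2 + σG ^ 2) - √2 * (σF + σG)) := by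
    rw [foldedNormalMean_zero_right]
    ring
  have hk : 0 < foldedNormalMean √(σF ^ 2 + σG ^ 2) 0 - √2 * stdPdf 0 * (σF + σG) := by
    rw [h_disp]
    exact mul_pos (stdPdf_pos 0) (two_mul_sqrt_sub_sqrt_two_mul_add_pos hσ)
  have hkρ : (foldedNormalMean √(σF ^ 2 + σG ^ 2) 0 - √2 * stdPdf 0 * (σF + σG)) *
      √(σF ^ 2 + σG ^ 2) ≤ |σF - σG| * foldedNormalMean |σF - σG| 0 := by
    have h := two_mul_sqrt_sub_sqrt_two_mul_add_mul_sqrt_le hσF.le hσG.le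
    rw [← sq_abs (σF - σG)] at h
    rw [h_disp, foldedNormalMean_zero_right, mul_assoc]
    calc stdPdf 0 * ((2 * √(σF ^ 2 + σG ^ 2) - √2 * (σF + σG)) * √(σF ^ 2 + σG ^ 2))
        ≤ stdPdf 0 * (2 * |σF - σG| ^ 2) := mul_le_mul_of_nonneg_left h (stdPdf_pos 0).le
      _ = |σF - σG| * (2 * |σF - σG| * stdPdf 0) := by ring
  convert sub_div_sub_le_foldedNormalMean_zero_div (abs_pos.2 (sub_ne_zero.2 hσ))
    (abs_sub_le_sqrt_sq_add_sq hσF.le hσG.le) (abs_nonneg (μF - μG)) hk hkρ using 2 <;>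
    simp only [foldedNormalMean, zero_div, zero_mul, zero_add, add_comm]

/-- For normal distributions `F = N(μ_F, σ_F²) ≠ G = N(μ_G, σ_G²)`, the Cramér
distance assigns a weakly smaller relative weight to dispersion than the AVM,
expressed via the closed forms of the distances and their dispersion terms. -/
theorem cd_disp_weight_le_avm (μF μG σF σG : ℝ)
    (hσF : 0 < σF) (hσG : 0 < σG) (hne : (μF, σF) ≠ (μG, σG)) :
    (σF = σG →
      (2 * Real.sqrt (σF ^ 2 + σG ^ 2) * stdPdf 0 -
          Real.sqrt 2 * stdPdf 0 * (σF + σG)) /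
        (2 * Real.sqrt (σF ^ 2 + σG ^ 2) *
            stdPdf (|μF - μG| / Real.sqrt (σF ^ 2 + σG ^ 2)) +
          |μF - μG| *
            (2 * stdCdf (|μF - μG| / Real.sqrt (σF ^ 2 + σG ^ 2)) - 1) -
          Real.sqrt 2 * stdPdf 0 * (σF + σG)) ≤
      (2 * |σF - σG| * stdPdf 0) / |μF - μG|) ∧
    (σF ≠ σG →
      (2 * Real.sqrt (σF ^ 2 + σG ^ 2) * stdPdf 0 -
          Real.sqrt 2 * stdPdf 0 * (σF + σG)) /
        (2 * Real.sqrt (σF ^ 2 + σG ^ 2) *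
            stdPdf (|μF - μG| / Real.sqrt (σF ^ 2 + σG ^ 2)) +
          |μF - μG| *
            (2 * stdCdf (|μF - μG| / Real.sqrt (σF ^ 2 + σG ^ 2)) - 1) -
          Real.sqrt 2 * stdPdf 0 * (σF + σG)) ≤
      (2 * |σF - σG| * stdPdf 0) /
        (|μF - μG| * (2 * stdCdf (|μF - μG| / |σF - σG|) - 1) +
          2 * |σF - σG| * stdPdf (|μF - μG| / |σF - σG|))) :=
  cd_disp_weight_le_avm_general μF μG σF σG hσF hσG
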